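/- Let n ≥ 1, let m > 2 be an integer, and let Γ(m) = (R_m)^n ⋊ C_m be the finite lamplighter group, where R_m = (ℤ/mℤ)[X]/(X^m − 1) and the generator of the cyclic group C_m of order m acts on each coordinate of (R_m)^n by multiplication by X. Then the centraliser in Γ(m) of the derived subgroup [Γ(m), Γ(m)] equals the base subgroup {(v, 0) : v ∈ (R_m)^n}. -/

import Mathlib

/-!
The derived subgroup lies in the abelian base `(R_m)^n`, which therefore centralises it.
Conversely, with `t` the generator of `C_m`, the commutator `[t, (1, …, 1)]` is
`(X - 1, …, X - 1)`, and `t^k` fixes it only if `X^k (X - 1) = X - 1` in `R_m`. Both sides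
have representatives of degree `< m`, namely `X^((k+1) mod m) - X^k` and `X - 1`, which must
then be equal as polynomials; for `0 < k < m` their constant terms differ by `1` or `2`,
and `2 ≠ 0` in `ℤ/mℤ` exactly because `m > 2`.
-/

/-- The ring `R_m = (ℤ/mℤ)[X]/(X^m − 1)`. -/
abbrev Rm (m : ℕ) : Type :=
  Polynomial (ZMod m) ⧸ Ideal.span {(Polynomial.X : Polynomial (ZMod m)) ^ m - 1}

/-- The image of `X` in `R_m`, as a unit. -/
noncomputable def RmX (m : ℕ) [NeZero m] : (Rm m)ˣ where
  val := Ideal.Quotient.mk _ Polynomial.X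
  inv := Ideal.Quotient.mk _ (Polynomial.X ^ (m - 1))
  val_inv := by
    have h : (Polynomial.X : Polynomial (ZMod m)) * Polynomial.X ^ (m - 1) =
        Polynomial.X ^ m - 1 + 1 := by
      rw [← pow_succ']
      rw [show m - 1 + 1 = m from by have := NeZero.pos m; omega]
      ring
    have h2 : Ideal.Quotient.mk (Ideal.span {(Polynomial.X : Polynomial (ZMod m)) ^ m - 1})
        ((Polynomial.X : Polynomial (ZMod m)) ^ m - 1) = 0 :=
      Ideal.Quotient.eq_zero_iff_mem.mpr (Ideal.subset_span rfl)
    rw [← map_mul, h, map_add, map_one, h2, zero_add]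
  inv_val := by
    have h : (Polynomial.X : Polynomial (ZMod m)) ^ (m - 1) * Polynomial.X =
        Polynomial.X ^ m - 1 + 1 := by
      rw [← pow_succ]
      rw [show m - 1 + 1 = m from by have := NeZero.pos m; omega]
      ring
    have h2 : Ideal.Quotient.mk (Ideal.span {(Polynomial.X : Polynomial (ZMod m)) ^ m - 1})
        ((Polynomial.X : Polynomial (ZMod m)) ^ m - 1) = 0 :=
      Ideal.Quotient.eq_zero_iff_mem.mpr (Ideal.subset_span rfl)
    rw [← map_mul, h, map_add, map_one, h2, zero_add]

lemma RmX_pow_eq_one (m : ℕ) [NeZero m] : RmX m ^ m = 1 := by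
  ext
  push_cast [RmX]
  rw [← map_pow, ← map_one (Ideal.Quotient.mk _), Ideal.Quotient.mk_eq_mk_iff_sub_mem]
  exact Ideal.subset_span rfl

/-- The homomorphism from the cyclic group `C_m = ZMod m` (written multiplicatively)
to a group `G`, sending the generator `1` to a given element `g` satisfying `g ^ m = 1`. -/
def zmodPowHom {G : Type*} [Group G] (m : ℕ) [NeZero m] (g : G) (hg : g ^ m = 1) :
    Multiplicative (ZMod m) →* G where
  toFun k := g ^ (Multiplicative.toAdd k).val
  map_one' := by
    show g ^ (0 : ZMod m).val = 1
    simp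
  map_mul' a b := by
    show g ^ (a.toAdd + b.toAdd).val = g ^ a.toAdd.val * g ^ b.toAdd.val
    rw [ZMod.val_add, ← pow_eq_pow_mod _ hg, pow_add]

/-- The canonical homomorphism `AddAut A →* MulAut (Multiplicative A)`. -/
def addAutToMulAut (A : Type*) [AddGroup A] : Multiplicative (AddAut A) →* MulAut (Multiplicative A) where
  toFun e := AddEquiv.toMultiplicative (Multiplicative.toAdd e)
  map_one' := rfl
  map_mul' _ _ := rfl

/-- The action of `C_m` on `(R_m)^n` in which the generator of `C_m` acts on each
coordinate by multiplication by `X`. -/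
noncomputable def finLampAction (n m : ℕ) [NeZero m] :
    Multiplicative (ZMod m) →* MulAut (Multiplicative (Fin n → Rm m)) :=
  ((addAutToMulAut (Fin n → Rm m)).comp
    (DistribMulAction.toAddAut (Rm m)ˣ (Fin n → Rm m))).comp
      (zmodPowHom m (RmX m) (RmX_pow_eq_one m))

/-- The finite lamplighter group `Γ(m) = C_m^n ≀ C_m = (R_m)^n ⋊ C_m`, where the
generator of `C_m` acts on each coordinate of `(R_m)^n` by multiplication by `X`. -/
abbrev FinLamplighter (n m : ℕ) [NeZero m] : Type :=
  SemidirectProduct (Multiplicative (Fin n → Rm m)) (Multiplicative (ZMod m))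
    (finLampAction n m)

open Polynomial

theorem Polynomial.Monic.eq_of_mk_eq_of_degree_lt {R : Type*} [CommRing R] {f p q : R[X]}
    (hf : f.Monic) (hp : p.degree < f.degree) (hq : q.degree < f.degree)
    (h : Ideal.Quotient.mk (Ideal.span {f}) p = Ideal.Quotient.mk _ q) : p = q := by
  rw [Ideal.Quotient.mk_eq_mk_iff_sub_mem, Ideal.mem_span_singleton] at h
  by_contra hne
  exact hf.not_dvd_of_degree_lt (sub_ne_zero.2 hne) ((degree_sub_le p q).trans_lt (max_lt hp hq)) h

theorem eq_zero_of_RmX_pow_mul_sub_one_eq {m : ℕ} [NeZero m] (hm : 2 < m) {k : ℕ} (hk : k < m)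
    (h : (RmX m : Rm m) ^ k * (RmX m - 1) = RmX m - 1) : k = 0 := by
  have : Nontrivial (ZMod m) := ZMod.nontrivial_iff.2 (by omega)
  have hmonic : ((X : (ZMod m)[X]) ^ m - 1).Monic := by
    simpa using monic_X_pow_sub_C (1 : ZMod m) (NeZero.ne m)
  have hdeg : ((X : (ZMod m)[X]) ^ m - 1).degree = m := by
    simpa using degree_X_pow_sub_C (R := ZMod m) (NeZero.pos m) 1
  have hpoly : (X : (ZMod m)[X]) ^ ((k + 1) % m) - X ^ k = X - 1 := by
    refine hmonic.eq_of_mk_eq_of_degree_lt ?_ ?_ ?_ <;> try rw [hdeg]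
    · refine (degree_sub_le _ _).trans_lt (max_lt ?_ ?_) <;> rw [degree_X_pow] <;> norm_cast
      exact Nat.mod_lt _ (NeZero.pos m)
    · rw [← C_1, degree_X_sub_C]; exact_mod_cast (by omega : 1 < m)
    · have hx : (RmX m : Rm m) ^ m = 1 := by
        rw [← Units.val_pow_eq_pow_val, RmX_pow_eq_one, Units.val_one]
      rw [mul_sub, mul_one, ← pow_succ, pow_eq_pow_mod _ hx] at h
      simpa [RmX] using h
  have hcoeff := congrArg (coeff · 0) hpoly
  by_contra hk0
  simp only [coeff_sub, coeff_X_pow, coeff_X_zero, coeff_one_zero, Ne.symm hk0, if_false,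
    sub_zero, zero_sub] at hcoeff
  split_ifs at hcoeff
  · have htwo : ((2 : ℕ) : ZMod m) = 0 := by push_cast; linear_combination hcoeff
    rw [ZMod.natCast_eq_zero_iff] at htwo
    exact absurd (Nat.le_of_dvd two_pos htwo) (by omega)
  · exact one_ne_zero (neg_eq_zero.1 hcoeff.symm)

open scoped commutatorElement

namespace SemidirectProduct

variable {N G : Type*}

theorem commutatorElement_inr_inl [Group N] [Group G] {φ : G →* MulAut N} (t : G) (a : N) :
    ⁅(inr t : N ⋊[φ] G), (inl a : N ⋊[φ] G)⁆ = inl (φ t a * a⁻¹) := by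
  rw [commutatorElement_def, map_mul, inl_aut, map_inv, map_inv]

theorem commute_inl_iff [CommGroup N] [Group G] {φ : G →* MulAut N} {u : N} {g : N ⋊[φ] G} :
    Commute (inl u) g ↔ φ g.right u = u := by
  rw [Commute, SemiconjBy, SemidirectProduct.ext_iff]
  simp [mul_comm u, eq_comm]

theorem commutator_le_range_inl [Group N] [CommGroup G] {φ : G →* MulAut N} :
    commutator (N ⋊[φ] G) ≤ inl.range := by
  rw [range_inl_eq_ker_rightHom]
  exact Abelianization.commutator_subset_ker _

theorem range_inl_le_centralizer_commutator [CommGroup N] [CommGroup G] {φ : G →* MulAut N} :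
    inl.range ≤ Subgroup.centralizer (commutator (N ⋊[φ] G) : Set (N ⋊[φ] G)) :=
  (Subgroup.le_centralizer _).trans (Subgroup.centralizer_le commutator_le_range_inl)

end SemidirectProduct

theorem finLampAction_toAdd_apply (n m : ℕ) [NeZero m] (t : Multiplicative (ZMod m))
    (v : Multiplicative (Fin n → Rm m)) :
    (finLampAction n m t v).toAdd = RmX m ^ t.toAdd.val • v.toAdd :=
  rfl

theorem commutatorElement_inr_one_inl_one (n : ℕ) {m : ℕ} [NeZero m] (hm : m ≠ 1) :
    ⁅(SemidirectProduct.inr (Multiplicative.ofAdd 1) : FinLamplighter n m),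
      (SemidirectProduct.inl (Multiplicative.ofAdd fun _ => 1) : FinLamplighter n m)⁆ =
      SemidirectProduct.inl (Multiplicative.ofAdd fun _ => (RmX m : Rm m) - 1) := by
  rw [SemidirectProduct.commutatorElement_inr_inl]
  congr 1
  ext i
  simp [finLampAction_toAdd_apply, ZMod.val_one'' hm, Units.smul_def, sub_eq_add_neg]

theorem eq_one_of_finLampAction_fixes_X_sub_one {n m : ℕ} [NeZero m] (hm : 2 < m) (i : Fin n)
    {t : Multiplicative (ZMod m)}
    (h : finLampAction n m t (Multiplicative.ofAdd fun _ => (RmX m : Rm m) - 1) =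
      Multiplicative.ofAdd fun _ => (RmX m : Rm m) - 1) : t = 1 := by
  have hi := congrFun (congrArg Multiplicative.toAdd h) i
  rw [finLampAction_toAdd_apply] at hi
  have hval := eq_zero_of_RmX_pow_mul_sub_one_eq hm (ZMod.val_lt t.toAdd)
    (by simpa [Units.smul_def] using hi)
  exact (ZMod.val_eq_zero _).1 hval

/-- In the finite lamplighter group `Γ(m) = (R_m)^n ⋊ C_m` with `m > 2`, the centraliser
of the derived subgroup `[Γ(m), Γ(m)]` is exactly the base subgroup `(R_m)^n`. -/
theorem centralizer_commutator_finLamplighter (n m : ℕ) (hn : 1 ≤ n) (hm : 2 < m) :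
    haveI : NeZero m := ⟨by omega⟩
    Subgroup.centralizer (commutator (FinLamplighter n m) : Set (FinLamplighter n m)) =
      (SemidirectProduct.inl :
        Multiplicative (Fin n → Rm m) →* FinLamplighter n m).range := by
  have : NeZero m := ⟨by omega⟩
  refine le_antisymm (fun g hg => ?_) SemidirectProduct.range_inl_le_centralizer_commutator
  have hcomm : Commute _ g := Subgroup.mem_centralizer_iff.1 hg _ <|
    commutatorElement_inr_one_inl_one n (by omega : m ≠ 1) ▸
      Subgroup.commutator_mem_commutator (Subgroup.mem_top _) (Subgroup.mem_top _)
  rw [SemidirectProduct.commute_inl_iff] at hcomm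
  rw [SemidirectProduct.range_inl_eq_ker_rightHom, MonoidHom.mem_ker]
  exact eq_one_of_finLampAction_fixes_X_sub_one hm ⟨0, hn⟩ hcomm
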